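/- Let (X,ρ) be a metric space, let P be an abstract porosity on X, and let A ⊆ X be a set that is not σ-P-porous. Then K_P(K_P(A)) = K_P(A); that is, the set K_P(A) is σ-P-porous at none of its points. -/

import Mathlib

open Metric Filter Set

/-- An abstract porosity on a metric space `X`: a relation between points and subsets
of `X` satisfying the axioms (A1), (A2), (A3). -/
structure AbstractPorosity (X : Type*) [MetricSpace X] where
  rel : X → Set X → Prop
  mono : ∀ (x : X) (A B : Set X), A ⊆ B → rel x B → rel x A
  loc : ∀ (x : X) (A : Set X), rel x A ↔ ∃ r > 0, rel x (A ∩ Metric.ball x r)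
  clos : ∀ (x : X) (A : Set X), rel x A ↔ rel x (closure A)

variable {X : Type*} [MetricSpace X]

/-- `A` is `P`-porous if `P(x,A)` holds at each point `x ∈ A`. -/
def AbstractPorosity.Porous (P : AbstractPorosity X) (A : Set X) : Prop :=
  ∀ x ∈ A, P.rel x A

/-- `A` is σ-`P`-porous if it is a countable union of `P`-porous sets. -/
def AbstractPorosity.SigmaPorous (P : AbstractPorosity X) (A : Set X) : Prop :=
  ∃ f : ℕ → Set X, (∀ n, P.Porous (f n)) ∧ A = ⋃ n, f n

/-- `A` is σ-`P`-porous at `x` if some `A ∩ B(x,r)` (r>0) is σ-`P`-porous. -/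
def AbstractPorosity.SigmaPorousAt (P : AbstractPorosity X) (A : Set X) (x : X) : Prop :=
  ∃ r > 0, P.SigmaPorous (A ∩ Metric.ball x r)

/-- The kernel `K_P(A)`: points of `A` at which `A` is not σ-`P`-porous. -/
def AbstractPorosity.kernel (P : AbstractPorosity X) (A : Set X) : Set X :=
  {x ∈ A | ¬ P.SigmaPorousAt A x}

/-!
A point of `A \ K_P(A)` has a ball in which `A` is σ-`P`-porous, and σ-porosity is a local
property: by Stone's construction a cover by balls has a refinement by countably many uniformly
separated families, and by (A2) a uniformly separated union of porous sets is porous. So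
`A \ K_P(A)` is σ-`P`-porous, and if `K_P(A)` were σ-`P`-porous in a ball `B(x,r)` then so would
be `A ∩ B(x,r) ⊆ (K_P(A) ∩ B(x,r)) ∪ (A \ K_P(A))`.
-/

section Refinement

variable {α : Type*} [PseudoMetricSpace α]

/-- Stone's construction, for a well-ordering of `ι`: `V n i` is the union of the balls
`ball c (2⁻¹ ^ n)` over the points `c` whose least covering index is `i` and with
`ball c (3 * 2⁻¹ ^ n) ⊆ U i`. Balls with different indices are `2⁻¹ ^ n`-apart, since otherwise
the center with the later index would lie in the earlier `U i`. -/
theorem exists_uniformlySeparated_refinement {ι : Type*} (U : ι → Set α)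
    (hU : ∀ i, IsOpen (U i)) :
    ∃ V : ℕ → ι → Set α, (∀ n i, V n i ⊆ U i) ∧ (⋃ i, U i) ⊆ (⋃ n, ⋃ i, V n i) ∧
      ∀ n, ∃ δ > 0, ∀ i j, i ≠ j → ∀ x ∈ V n i, ∀ y ∈ V n j, δ ≤ dist x y := by
  obtain ⟨_, _⟩ := exists_wellFoundedLT ι
  set V : ℕ → ι → Set α := fun n i =>
    ⋃ c ∈ {c | (∀ j < i, c ∉ U j) ∧ ball c (3 * 2⁻¹ ^ n) ⊆ U i}, ball c (2⁻¹ ^ n)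
  have hδ (n : ℕ) : (0 : ℝ) < 2⁻¹ ^ n := by positivity
  refine ⟨V, fun n i x hx => ?_, fun x hx => ?_, fun n => ⟨2⁻¹ ^ n, hδ n, ?_⟩⟩
  · obtain ⟨c, ⟨-, hc⟩, hxc⟩ := mem_iUnion₂.mp hx
    exact hc (ball_subset_ball (by linarith [hδ n]) hxc)
  · have hne : {i | x ∈ U i}.Nonempty := mem_iUnion.mp hx
    set i := wellFounded_lt.min {i | x ∈ U i} hne
    have hxi : x ∈ U i := wellFounded_lt.min_mem {i | x ∈ U i} hne
    obtain ⟨ε, hε, hball⟩ := Metric.isOpen_iff.mp (hU i) x hxi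
    obtain ⟨n, hn⟩ := exists_pow_lt_of_lt_one (div_pos hε three_pos) (by norm_num : (2⁻¹ : ℝ) < 1)
    refine mem_iUnion_of_mem n (mem_iUnion_of_mem i (mem_biUnion ⟨?_, ?_⟩ (mem_ball_self (hδ n))))
    · exact fun j hj hxj => wellFounded_lt.not_lt_min {i | x ∈ U i} hxj hj
    · exact (ball_subset_ball (by linarith)).trans hball
  · have key : ∀ i j, i < j → ∀ x ∈ V n i, ∀ y ∈ V n j, 2⁻¹ ^ n ≤ dist x y := by
      intro i j hij x hx y hy
      obtain ⟨c, ⟨-, hc⟩, hxc⟩ := mem_iUnion₂.mp hx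
      obtain ⟨c', ⟨hc', -⟩, hyc'⟩ := mem_iUnion₂.mp hy
      refine le_of_not_gt fun hxy => hc' i hij (hc (mem_ball.mpr ?_))
      rw [mem_ball] at hxc hyc'
      linarith [dist_triangle4 c' y x c, dist_comm c' y, dist_comm y x]
    intro i j hij x hx y hy
    rcases hij.lt_or_gt with h | h
    · exact key i j h x hx y hy
    · exact dist_comm x y ▸ key j i h y hy x hx

end Refinement

namespace AbstractPorosity

variable {P : AbstractPorosity X}

theorem Porous.mono {A B : Set X} (hB : P.Porous B) (h : A ⊆ B) : P.Porous A :=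
  fun x hx => P.mono x A B h (hB x (h hx))

variable (P) in
theorem sigmaPorous_iff_subset_sUnion {A : Set X} :
    P.SigmaPorous A ↔
      ∃ S : Set (Set X), S.Countable ∧ (∀ s ∈ S, P.Porous s) ∧ A ⊆ ⋃₀ S := by
  constructor
  · rintro ⟨f, hf, rfl⟩
    exact ⟨range f, countable_range f, forall_mem_range.mpr hf, by rw [sUnion_range]⟩
  · rintro ⟨S, hSc, hS, hAS⟩
    have hempty : P.Porous ∅ := fun _ h => h.elim
    obtain ⟨e, he⟩ := (hSc.insert ∅).exists_eq_range (insert_nonempty _ _)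
    have he_porous (n : ℕ) : P.Porous (e n) := by
      rcases (he ▸ mem_range_self n : e n ∈ insert ∅ S) with h | h
      · exact h ▸ hempty
      · exact hS _ h
    refine ⟨fun n => e n ∩ A, fun n => (he_porous n).mono inter_subset_left, ?_⟩
    rw [← iUnion_inter, eq_comm, inter_eq_right, ← sUnion_range, ← he, sUnion_insert]
    exact hAS.trans subset_union_right

theorem Porous.sigmaPorous {A : Set X} (h : P.Porous A) : P.SigmaPorous A :=
  (P.sigmaPorous_iff_subset_sUnion).mpr ⟨{A}, countable_singleton A, by simpa using h, by simp⟩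

theorem SigmaPorous.mono {A B : Set X} (hB : P.SigmaPorous B) (h : A ⊆ B) : P.SigmaPorous A := by
  obtain ⟨S, hSc, hS, hBS⟩ := (P.sigmaPorous_iff_subset_sUnion).mp hB
  exact (P.sigmaPorous_iff_subset_sUnion).mpr ⟨S, hSc, hS, h.trans hBS⟩

variable (P) in
theorem sigmaPorous_iUnion {ι : Sort*} [Countable ι] {f : ι → Set X}
    (h : ∀ i, P.SigmaPorous (f i)) : P.SigmaPorous (⋃ i, f i) := by
  choose S hSc hS hfS using fun i => (P.sigmaPorous_iff_subset_sUnion).mp (h i)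
  refine (P.sigmaPorous_iff_subset_sUnion).mpr ⟨⋃ i, S i, countable_iUnion hSc, ?_, ?_⟩
  · simp only [mem_iUnion, forall_exists_index]
    exact fun s i hs => hS i s hs
  · rw [sUnion_iUnion]
    exact iUnion_mono hfS

theorem SigmaPorous.union {A B : Set X} (hA : P.SigmaPorous A) (hB : P.SigmaPorous B) :
    P.SigmaPorous (A ∪ B) := by
  rw [union_eq_iUnion]
  exact P.sigmaPorous_iUnion (Bool.forall_bool.mpr ⟨hB, hA⟩)

variable (P) in
theorem porous_iUnion_of_uniformlySeparated {ι : Type*} {s : ι → Set X}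
    (hs : ∀ i, P.Porous (s i)) {δ : ℝ} (hδ : 0 < δ)
    (hsep : ∀ i j, i ≠ j → ∀ x ∈ s i, ∀ y ∈ s j, δ ≤ dist x y) : P.Porous (⋃ i, s i) := by
  intro x hx
  obtain ⟨i, hxi⟩ := mem_iUnion.mp hx
  refine (P.loc x _).mpr ⟨δ, hδ, P.mono x _ (s i) ?_ (hs i x hxi)⟩
  rintro y ⟨hy, hyx⟩
  obtain ⟨j, hyj⟩ := mem_iUnion.mp hy
  obtain rfl : j = i := by
    by_contra hji
    exact (hsep i j (Ne.symm hji) x hxi y hyj).not_gt (by simpa [dist_comm] using hyx)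
  exact hyj

variable (P) in
theorem sigmaPorous_of_forall_sigmaPorousAt {D : Set X} (h : ∀ x ∈ D, P.SigmaPorousAt D x) :
    P.SigmaPorous D := by
  choose r hr hDr using h
  choose g hg hgD using fun x : D => hDr x x.2
  obtain ⟨V, hVU, hcover, hsep⟩ :=
    exists_uniformlySeparated_refinement (fun x : D => ball (x : X) (r x x.2)) fun _ => isOpen_ball
  have hD : D ⊆ ⋃ n, ⋃ k, ⋃ x : D, g x k ∩ V n x := by
    intro y hy
    obtain ⟨n, hn⟩ := mem_iUnion.mp (hcover (mem_iUnion.mpr ⟨⟨y, hy⟩, mem_ball_self (hr y hy)⟩))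
    obtain ⟨x, hyx⟩ := mem_iUnion.mp hn
    have hyg : y ∈ ⋃ k, g x k := hgD x ▸ ⟨hy, hVU n x hyx⟩
    obtain ⟨k, hk⟩ := mem_iUnion.mp hyg
    exact mem_iUnion_of_mem n (mem_iUnion_of_mem k (mem_iUnion_of_mem x ⟨hk, hyx⟩))
  refine SigmaPorous.mono (P.sigmaPorous_iUnion fun n => P.sigmaPorous_iUnion fun k => ?_) hD
  obtain ⟨δ, hδ, hVsep⟩ := hsep n
  refine Porous.sigmaPorous (P.porous_iUnion_of_uniformlySeparated
    (fun x => (hg x k).mono inter_subset_left) hδ ?_)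
  exact fun x x' hxx' y hy y' hy' => hVsep x x' hxx' y hy.2 y' hy'.2

variable (P) in
theorem sigmaPorous_diff_kernel (A : Set X) : P.SigmaPorous (A \ P.kernel A) := by
  refine P.sigmaPorous_of_forall_sigmaPorousAt fun x ⟨hxA, hxK⟩ => ?_
  obtain ⟨r, hr, hAr⟩ := not_not.mp fun h => hxK ⟨hxA, h⟩
  exact ⟨r, hr, hAr.mono (inter_subset_inter_left _ sdiff_subset)⟩

end AbstractPorosity

theorem kernel_kernel_eq_kernel_general {X : Type*} [MetricSpace X]
    (P : AbstractPorosity X) (A : Set X) :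
    P.kernel (P.kernel A) = P.kernel A := by
  refine (sep_subset _ _).antisymm fun x hx => ⟨hx, fun ⟨r, hr, hKr⟩ => hx.2 ⟨r, hr, ?_⟩⟩
  have hsplit : A ∩ ball x r ⊆ (P.kernel A ∩ ball x r) ∪ (A \ P.kernel A) := by
    rintro y ⟨hyA, hyr⟩
    by_cases hyK : y ∈ P.kernel A
    · exact Or.inl ⟨hyK, hyr⟩
    · exact Or.inr ⟨hyA, hyK⟩
  exact (hKr.union (P.sigmaPorous_diff_kernel A)).mono hsplit

/-- If `A` is not σ-`P`-porous, then `K_P(K_P(A)) = K_P(A)`. -/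
theorem kernel_kernel_eq_kernel {X : Type*} [MetricSpace X]
    (P : AbstractPorosity X) (A : Set X) (hA : ¬ P.SigmaPorous A) :
    P.kernel (P.kernel A) = P.kernel A :=
  kernel_kernel_eq_kernel_general P A
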